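/- arXiv:1210.0268 — 7 statements merged into one kernel-verified Lean document; each statement's English description precedes it below -/
import Mathlib

section
/- Let x* = (5·n_p + 4·n_p·a − 4·a)/(3·n_p) and z* = (10·n_p − 6 + 5·n_p·a − 5·a)/(12·(n_p − 1)). If n_p ∈ (0,1) and n_p < 8/11, then 0 < x* < 1 and 0 < z* < 1 if and only if (1/2)·n_p/(1−n_p) < a < (5/4)·n_p/(1−n_p). -/
/-- Non-spurious interior equilibrium condition when n_p < 8/11. -/
theorem interior_nonspurious_small_np (np a : ℝ) (hnp : np ∈ Set.Ioo (0:ℝ) 1)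
    (hnp811 : np < 8/11)
    (xs zs : ℝ)
    (hxs : xs = (5*np + 4*np*a - 4*a)/(3*np))
    (hzs : zs = (10*np - 6 + 5*np*a - 5*a)/(12*(np - 1))) :
    (0 < xs ∧ xs < 1 ∧ 0 < zs ∧ zs < 1) ↔
      ((1/2) * np/(1 - np) < a ∧ a < (5/4) * np/(1 - np)) := by
  obtain ⟨h0, h1⟩ := hnp
  have h1n : (0:ℝ) < 1 - np := by linarith
  have h3 : (0:ℝ) < 3*np := by linarith
  have h12 : (0:ℝ) < 12*(1-np) := by linarith
  have hzs' : zs = (6 - 10*np + 5*a - 5*np*a)/(12*(1-np)) := by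
    rw [hzs, div_eq_div_iff (by linarith) (by positivity)]; ring
  constructor
  · rintro ⟨hx0, hx1, -, -⟩
    rw [hxs] at hx0 hx1
    have hx0' : 0 < 5*np + 4*np*a - 4*a := by
      by_contra h
      push_neg at h
      have := div_nonpos_of_nonpos_of_nonneg h (le_of_lt h3)
      linarith
    have hx1' : 5*np + 4*np*a - 4*a < 3*np := (div_lt_one h3).mp hx1
    constructor
    · rw [div_lt_iff₀ h1n]; nlinarith
    · rw [lt_div_iff₀ h1n]; nlinarith
  · rintro ⟨ha1, ha2⟩
    rw [div_lt_iff₀ h1n] at ha1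
    rw [lt_div_iff₀ h1n] at ha2
    refine ⟨?_, ?_, ?_, ?_⟩
    · rw [hxs]; exact div_pos (by nlinarith) h3
    · rw [hxs]; exact (div_lt_one h3).mpr (by nlinarith)
    · rw [hzs']; exact div_pos (by nlinarith) h12
    · rw [hzs']; exact (div_lt_one h12).mpr (by nlinarith)
end

section
/- Let x* = (5·n_p + 4·n_p·a − 4·a)/(3·n_p) and z* = (10·n_p − 6 + 5·n_p·a − 5·a)/(12·(n_p − 1)). If n_p ∈ [4/5, 1), then 0 < x* < 1 and 0 < z* < 1 if and only if (2/5)·(5·n_p − 3)/(1 − n_p) < a < (2/5)·(3 − n_p)/(1 − n_p). -/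
/-- Non-spurious interior equilibrium condition when n_p ≥ 4/5. -/
theorem interior_nonspurious_large_np (np a : ℝ) (hnp : np ∈ Set.Ico (4/5 : ℝ) 1)
    (xs zs : ℝ)
    (hxs : xs = (5*np + 4*np*a - 4*a)/(3*np))
    (hzs : zs = (10*np - 6 + 5*np*a - 5*a)/(12*(np - 1))) :
    (0 < xs ∧ xs < 1 ∧ 0 < zs ∧ zs < 1) ↔
      ((2/5) * (5*np - 3)/(1 - np) < a ∧ a < (2/5) * (3 - np)/(1 - np)) := by
  obtain ⟨h4, h5⟩ := hnp
  have hd1 : (0:ℝ) < 3*np := by linarith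
  have hd2 : 12*(np-1) < 0 := by linarith
  have h1n : (0:ℝ) < 1 - np := by linarith
  subst hxs hzs
  rw [div_lt_iff₀ h1n, lt_div_iff₀ h1n]
  constructor
  · rintro ⟨ha, hb, hc, hd⟩
    rw [lt_div_iff_of_neg hd2] at hc
    rw [div_lt_one_of_neg hd2] at hd
    constructor <;> nlinarith
  · rintro ⟨ha, hb⟩
    refine ⟨div_pos (by nlinarith) hd1, ?_, ?_, ?_⟩
    · rw [div_lt_one hd1]; nlinarith
    · rw [lt_div_iff_of_neg hd2]; nlinarith
    · rw [div_lt_one_of_neg hd2]; nlinarith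
end

section
/- If n_p ∈ (0,1) and a < (5/4)·n_p/(1−n_p), then both eigenvalues of the Jacobian of (f,g) at the origin (0,0) are strictly negative, so (0,0) is a linearly stable equilibrium. -/
/-! Each component has the form `c · x (x - 1) · k x` in its own variable, so its derivative at
`0` is `-c · k 0`: for `f` this is `-(5 n_p + 4 a (n_p - 1)) / 4`, negative exactly when
`a < (5/4) n_p / (1 - n_p)`, and for `g` it is `(5 n_p - 8) / 4 < 0`. -/

lemma hasDerivAt_const_mul_mul_sub_one_mul_zero {k : ℝ → ℝ} (c : ℝ)
    (hk : DifferentiableAt ℝ k 0) :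
    HasDerivAt (fun x => c * x * (x - 1) * k x) (-(c * k 0)) 0 := by
  have h := (((hasDerivAt_id' (0 : ℝ)).const_mul c).mul
    ((hasDerivAt_id' (0 : ℝ)).sub_const 1)).mul hk.hasDerivAt
  exact h.congr_deriv (by simp)

lemma deriv_const_mul_mul_sub_one_mul_zero {k : ℝ → ℝ} (c : ℝ)
    (hk : DifferentiableAt ℝ k 0) :
    deriv (fun x => c * x * (x - 1) * k x) 0 = -(c * k 0) :=
  (hasDerivAt_const_mul_mul_sub_one_mul_zero c hk).deriv

/-- If a < (5/4)·n_p/(1-n_p), both eigenvalues of the Jacobian at (0,0) are negative,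
so (0,0) is linearly stable. -/
theorem dystopia_stable (np a : ℝ) (hnp : np ∈ Set.Ioo (0:ℝ) 1)
    (ha : a < (5/4) * np/(1 - np))
    (f g : ℝ → ℝ → ℝ)
    (hf : ∀ x z, f x z = (1/4) * x * (x - 1) * (-3*np*x + 5*np + 4*np*a - 4*a))
    (hg : ∀ x z, g x z = -(1/4) * z * (z - 1) * (-16*np*z + 16*z + 5*np - 8 + 5*np*x)) :
    deriv (fun x => f x 0) 0 < 0 ∧ deriv (fun z => g 0 z) 0 < 0 := by
  have hnp_lt_one : np < 1 := hnp.2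
  have hfactor : a * (1 - np) < (5/4) * np := (lt_div_iff₀ (by linarith)).mp ha
  simp only [hf, hg]
  rw [deriv_const_mul_mul_sub_one_mul_zero _ (by fun_prop),
    deriv_const_mul_mul_sub_one_mul_zero _ (by fun_prop)]
  constructor <;> linarith
end

section
/- For all n_p ∈ (0,1) and a ∈ ℝ, it is not the case that both a < (1/2)·n_p/(1−n_p) and a > (2/5)·(3−n_p)/(1−n_p); equivalently, the conditions required for the interior equilibrium to be both non-spurious (in (0,1)×(0,1)) and linearly stable are contradictory, since (1/2)·n_p = (2/5)·(3−n_p) forces n_p = 4/3 ∉ (0,1). Hence the interior equilibrium is never stable. -/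
/-! The two thresholds share the denominator `1 - p`, and `p / 2 ≤ 2 / 5 * (3 - p)` amounts to
`p ≤ 4 / 3`; so for `p < 1` the upper bound on `a` never exceeds the lower one. -/

theorem div_two_mul_one_sub_le {K : Type*} [Field K] [LinearOrder K] [IsStrictOrderedRing K]
    {p : K} (hp : p < 1) : p / (2 * (1 - p)) ≤ 2 / 5 * (3 - p) / (1 - p) := by
  rw [← div_div]
  exact div_le_div_of_nonneg_right (by linarith) (by linarith)

/-- The interior equilibrium is never stable: the required parameter set is empty. -/
theorem interior_never_stable (np : ℝ) (hnp : np ∈ Set.Ioo (0:ℝ) 1) :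
    {a : ℝ | a < np/(2*(1 - np)) ∧ (2/5) * (3 - np)/(1 - np) < a} = ∅ :=
  Set.eq_empty_of_forall_notMem fun _ ⟨hlt, hgt⟩ =>
    (div_two_mul_one_sub_le hnp.2).not_gt (hgt.trans hlt)
end

section
/- Let x: ℝ≥0 → ℝ be a solution of ẋ = (1/4)·x·(x−1)·(−3·n_p·x + 5·n_p + 4·n_p·a − 4·a) with n_p ∈ (0,1), 0 < x* < 1 where x* = (5·n_p + 4·n_p·a − 4·a)/(3·n_p). If x(0) ∈ (x*, 1] then x(t) → 1 as t → ∞; if x(0) ∈ [0, x*) then x(t) → 0 as t → ∞. -/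
/-!
The right-hand side is `f u = (3 n_p / 4) u (1 - u) (u - x*)`. For a scalar autonomous equation
`x' = f x` with `f > 0` on `(a, b)`, `f b = 0` and `f ≤ 0` above `b`, a trajectory starting in
`(a, b]` can cross neither `b` from below nor its own initial value downwards, so it is
nondecreasing and bounded by `b`. Its limit is then an equilibrium in `(a, b]`, hence equals `b`.
Apply this with `(a, b) = (x*, 1)`, and to the reflected equation `y' = -f (-y)` with
`(a, b) = (-x*, 0)`.
-/

open Filter Set Topology

theorem MonotoneOn.exists_tendsto_atTop_of_bddAbove {α β : Type*} [LinearOrder α]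
    [ConditionallyCompleteLinearOrder β] [TopologicalSpace β] [OrderTopology β]
    {f : α → β} {a : α} (hf : MonotoneOn f (Ici a)) (hbdd : BddAbove (f '' Ici a)) :
    ∃ L, Tendsto f atTop (𝓝 L) := by
  have hmono : Monotone (fun t => f (max t a)) := fun s t hst =>
    hf (le_max_right s a) (le_max_right t a) (max_le_max hst le_rfl)
  have hrange : BddAbove (range fun t => f (max t a)) :=
    hbdd.mono (range_subset_iff.2 fun t => mem_image_of_mem f (le_max_right t a))
  refine ⟨_, (tendsto_atTop_ciSup hmono hrange).congr' ?_⟩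
  filter_upwards [eventually_ge_atTop a] with t ht
  rw [max_eq_left ht]

def IsForwardSolution (f x : ℝ → ℝ) : Prop :=
  ∀ t, 0 ≤ t → HasDerivAt x (f (x t)) t

namespace IsForwardSolution

variable {f x : ℝ → ℝ}

theorem neg (hx : IsForwardSolution f x) : IsForwardSolution (fun u => -f (-u)) (-x) :=
  fun t ht => by simpa using (hx t ht).neg

/-- Compare `x` with the barriers `b + ε (1 + s)`: at a contact point `x' = f (x s) ≤ 0 < ε`. -/
theorem le_of_nonpos_on_Ico (hx : IsForwardSolution f x) {b d : ℝ} (hbd : b < d)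
    (hf : ∀ u ∈ Ico b d, f u ≤ 0) (h0 : x 0 ≤ b) {t : ℝ} (ht : 0 ≤ t) : x t ≤ b := by
  refine le_of_forall_pos_lt_add fun δ hδ => ?_
  set ε := min δ (d - b) / (2 * (1 + t))
  have hmin : 0 < min δ (d - b) := lt_min hδ (sub_pos.2 hbd)
  have ht1 : 0 < 1 + t := by linarith
  have hε : 0 < ε := by positivity
  have hεt : ε * (1 + t) = min δ (d - b) / 2 := by simp only [ε]; field_simp
  have hB : ∀ s, HasDerivAt (fun s => b + ε * (1 + s)) ε s := fun s => by
    simpa using ((hasDerivAt_id s).const_add 1).const_mul ε |>.const_add b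
  have hbarrier := image_le_of_deriv_right_lt_deriv_boundary (f := x) (a := 0) (b := t)
    (fun s hs => (hx s hs.1).continuousAt.continuousWithinAt)
    (fun s hs => (hx s hs.1).hasDerivWithinAt) (by linarith) hB
    (fun s hs hxs => by
      have hs0 : 0 ≤ ε * (1 + s) := by have := hs.1; positivity
      have hst : ε * (1 + s) ≤ ε * (1 + t) := by gcongr; exact hs.2.le
      have hfx := hf (x s)
        ⟨by rw [hxs]; linarith, by rw [hxs]; linarith [min_le_right δ (d - b)]⟩
      linarith) (right_mem_Icc.2 ht)
  linarith [min_le_left δ (d - b)]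

theorem ge_of_nonneg_on_Ioc (hx : IsForwardSolution f x) {a c : ℝ} (hac : a < c)
    (hf : ∀ u ∈ Ioc a c, 0 ≤ f u) (h0 : c ≤ x 0) {t : ℝ} (ht : 0 ≤ t) : c ≤ x t := by
  have := hx.neg.le_of_nonpos_on_Ico (neg_lt_neg hac)
    (fun u hu => neg_nonpos.2 (hf (-u) ⟨lt_neg_of_lt_neg hu.2, neg_le.1 hu.1⟩))
    (neg_le_neg h0) ht
  simpa using this

theorem apply_nonpos_of_tendsto (hx : IsForwardSolution f x) {L : ℝ} (hf : ContinuousAt f L)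
    (hL : Tendsto x atTop (𝓝 L)) : f L ≤ 0 := by
  by_contra! hpos
  obtain ⟨T, hT⟩ : ∃ T, ∀ t ≥ T, f L / 2 ≤ f (x t) := eventually_atTop.1
    ((hf.tendsto.comp hL).eventually (eventually_ge_nhds (half_lt_self hpos)))
  set T₀ := max T 0
  have hgrowth : ∀ t ∈ Ici T₀, f L / 2 * (t - T₀) ≤ x t - x T₀ := fun t ht =>
    (convex_Ici T₀).mul_sub_le_image_sub_of_le_deriv
      (fun s hs => (hx s (le_trans (le_max_right _ _) hs)).continuousAt.continuousWithinAt)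
      (fun s hs => (hx s (le_trans (le_max_right _ _) (interior_subset hs))).differentiableAt
        |>.differentiableWithinAt)
      (fun s hs => by
        rw [interior_Ici] at hs
        rw [(hx s ((le_max_right _ _).trans hs.le)).deriv]
        exact hT s ((le_max_left _ _).trans hs.le))
      T₀ self_mem_Ici t ht ht
  have hlin : Tendsto (fun t => x T₀ + f L / 2 * (t - T₀)) atTop atTop :=
    tendsto_atTop_add_const_left _ _
      ((tendsto_atTop_add_const_right _ _ tendsto_id).const_mul_atTop (half_pos hpos))
  refine not_tendsto_atTop_of_tendsto_nhds hL (tendsto_atTop_mono' _ ?_ hlin)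
  filter_upwards [eventually_ge_atTop T₀] with t ht
  linarith [hgrowth t ht]

theorem apply_eq_zero_of_tendsto (hx : IsForwardSolution f x) {L : ℝ} (hf : ContinuousAt f L)
    (hL : Tendsto x atTop (𝓝 L)) : f L = 0 := by
  have hneg := hx.neg.apply_nonpos_of_tendsto (L := -L)
    (hf.comp_of_eq continuous_neg.continuousAt (neg_neg L)).neg hL.neg
  simp only [neg_neg] at hneg
  exact le_antisymm (hx.apply_nonpos_of_tendsto hf hL) (neg_nonpos.1 hneg)

theorem tendsto_of_mem_Ioc (hx : IsForwardSolution f x) (hf : Continuous f) {a b : ℝ}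
    (hpos : ∀ u ∈ Ioo a b, 0 < f u) (hb : f b = 0) (hneg : ∀ u, b < u → f u ≤ 0)
    (h0 : x 0 ∈ Ioc a b) : Tendsto x atTop (𝓝 b) := by
  have hnonneg : ∀ u ∈ Ioc a b, 0 ≤ f u := fun u hu =>
    hu.2.eq_or_lt.elim (fun h => h ▸ hb.ge) (fun h => (hpos u ⟨hu.1, h⟩).le)
  have hle : ∀ t, 0 ≤ t → x t ≤ b := fun t => hx.le_of_nonpos_on_Ico (lt_add_one b)
    (fun u hu => hu.1.eq_or_lt.elim (fun h => h ▸ hb.le) (hneg u)) h0.2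
  have hge : ∀ t, 0 ≤ t → x 0 ≤ x t := fun t => hx.ge_of_nonneg_on_Ioc h0.1
    (fun u hu => hnonneg u ⟨hu.1, hu.2.trans h0.2⟩) le_rfl
  have hmono : MonotoneOn x (Ici 0) := monotoneOn_of_hasDerivWithinAt_nonneg (convex_Ici 0)
    (fun t ht => (hx t ht).continuousAt.continuousWithinAt)
    (fun t ht => (hx t (interior_subset ht)).hasDerivWithinAt)
    fun t ht => hnonneg _
      ⟨h0.1.trans_le (hge t (interior_subset ht)), hle t (interior_subset ht)⟩
  obtain ⟨L, hL⟩ := hmono.exists_tendsto_atTop_of_bddAbove ⟨b, forall_mem_image.2 hle⟩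
  have hLb : L ≤ b := le_of_tendsto hL ((eventually_ge_atTop 0).mono hle)
  have haL : a < L := h0.1.trans_le (ge_of_tendsto hL ((eventually_ge_atTop 0).mono hge))
  have hfL : f L = 0 := hx.apply_eq_zero_of_tendsto hf.continuousAt hL
  obtain rfl | hLb := hLb.eq_or_lt
  · exact hL
  · exact absurd hfL (hpos L ⟨haL, hLb⟩).ne'

theorem tendsto_of_mem_Ico (hx : IsForwardSolution f x) (hf : Continuous f) {a b : ℝ}
    (hneg : ∀ u ∈ Ioo b a, f u < 0) (hb : f b = 0) (hpos : ∀ u, u < b → 0 ≤ f u)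
    (h0 : x 0 ∈ Ico b a) : Tendsto x atTop (𝓝 b) := by
  have := hx.neg.tendsto_of_mem_Ioc (hf.comp continuous_neg).neg (a := -a) (b := -b)
    (fun u hu => neg_pos.2 (hneg (-u) ⟨lt_neg_of_lt_neg hu.2, neg_lt.1 hu.1⟩))
    (by simp [hb]) (fun u hu => neg_nonpos.2 (hpos (-u) (neg_lt.1 hu)))
    ⟨neg_lt_neg h0.2, neg_le_neg h0.1⟩
  simpa using this.neg

end IsForwardSolution

/-- Basin of attraction for the one-dimensional user dynamics. -/
theorem basin_of_attraction (np a : ℝ) (hnp : np ∈ Set.Ioo (0:ℝ) 1)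
    (xs : ℝ) (hxs : xs = (5*np + 4*np*a - 4*a)/(3*np))
    (hxs0 : 0 < xs) (hxs1 : xs < 1)
    (x : ℝ → ℝ)
    (hode : ∀ t : ℝ, 0 ≤ t →
      HasDerivAt x ((1/4) * x t * (x t - 1) * (-3*np*(x t) + 5*np + 4*np*a - 4*a)) t) :
    (x 0 ∈ Set.Ioc xs 1 → Tendsto x atTop (nhds 1))
    ∧ (x 0 ∈ Set.Ico 0 xs → Tendsto x atTop (nhds 0)) := by
  set f : ℝ → ℝ := fun u => 3 * np / 4 * (u * (1 - u) * (u - xs))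
  have hc : 0 < 3 * np / 4 := by linarith [hnp.1]
  have hsol : IsForwardSolution f x := fun t ht => by
    convert hode t ht using 1
    have : 3 * np * xs = 5*np + 4*np*a - 4*a := by rw [hxs]; field_simp [hnp.1.ne']
    linear_combination (1/4) * x t * (x t - 1) * this
  have hf : Continuous f := by fun_prop
  refine ⟨hsol.tendsto_of_mem_Ioc hf (fun u hu => ?_) (by simp [f]) (fun u hu => ?_),
    hsol.tendsto_of_mem_Ico hf (fun u hu => ?_) (by simp [f]) (fun u hu => ?_)⟩
  · exact mul_pos hc
      (mul_pos (mul_pos (by linarith [hu.1]) (by linarith [hu.2])) (by linarith [hu.1]))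
  · exact mul_nonpos_of_nonneg_of_nonpos hc.le (mul_nonpos_of_nonpos_of_nonneg
      (mul_nonpos_of_nonneg_of_nonpos (by linarith) (by linarith)) (by linarith))
  · exact mul_neg_of_pos_of_neg hc
      (mul_neg_of_pos_of_neg (mul_pos hu.1 (by linarith [hu.2])) (by linarith [hu.2]))
  · exact mul_nonneg hc.le (mul_nonneg_of_nonpos_of_nonpos
      (mul_nonpos_of_nonpos_of_nonneg hu.le (by linarith)) (by linarith))
end

section
/- The Jacobian of (f,g) at (0,1) is diagonal, and both its eigenvalues are strictly negative if and only if n_p < 8/11 and a < (5/4)·n_p/(1−n_p) (given n_p ∈ (0,1)). Explicitly, the eigenvalues are −(1/4)·(5·n_p + 4·n_p·a − 4·a) and (1/4)·(−8 + 11·n_p), and the first is negative iff a < (5/4)·n_p/(1−n_p) while the second is negative iff n_p < 8/11. -/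
/-! At the equilibrium `(0, 1)` each component vanishes identically along the other
coordinate's axis, so the Jacobian is diagonal. Both `f` and `g` carry a factor
`u (u - 1)` in their own variable, and the product rule at a root of that factor
reduces each diagonal entry to the value of the remaining factor there. -/

section LogisticFactor

variable {𝕜 : Type*} [NontriviallyNormedField 𝕜] {h : 𝕜 → 𝕜}

theorem hasDerivAt_mul_sub_one_mul_zero (hh : DifferentiableAt 𝕜 h 0) :
    HasDerivAt (fun x => x * (x - 1) * h x) (-h 0) 0 := by
  have hid := hasDerivAt_id' (x := (0 : 𝕜))
  exact ((hid.mul (hid.sub_const 1)).mul hh.hasDerivAt).congr_deriv (by simp)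

theorem hasDerivAt_mul_sub_one_mul_one (hh : DifferentiableAt 𝕜 h 1) :
    HasDerivAt (fun x => x * (x - 1) * h x) (h 1) 1 := by
  have hid := hasDerivAt_id' (x := (1 : 𝕜))
  exact ((hid.mul (hid.sub_const 1)).mul hh.hasDerivAt).congr_deriv (by simp)

end LogisticFactor

theorem neg_quarter_mul_lt_zero_iff_lt_div {np a : ℝ} (hnp : np < 1) :
    -(1/4) * (5*np + 4*np*a - 4*a) < 0 ↔ a < (5/4) * np/(1 - np) := by
  rw [lt_div_iff₀ (sub_pos.mpr hnp)]
  constructor <;> intro h <;> linarith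

/-- Stability analysis at the equilibrium (0,1): the Jacobian is diagonal with
eigenvalues -(1/4)(5n_p+4n_p a-4a) and (1/4)(-8+11n_p); both eigenvalues are
negative iff n_p < 8/11 and a < (5/4)n_p/(1-n_p). -/
theorem jacobian_at_zero_one (np a : ℝ) (hnp : np ∈ Set.Ioo (0:ℝ) 1)
    (f g : ℝ → ℝ → ℝ)
    (hf : ∀ x z, f x z = (1/4) * x * (x - 1) * (-3*np*x + 5*np + 4*np*a - 4*a))
    (hg : ∀ x z, g x z = -(1/4) * z * (z - 1) * (-16*np*z + 16*z + 5*np - 8 + 5*np*x)) :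
    (deriv (fun z => f 0 z) 1 = 0 ∧ deriv (fun x => g x 1) 0 = 0)
    ∧ deriv (fun x => f x 1) 0 = -(1/4) * (5*np + 4*np*a - 4*a)
    ∧ deriv (fun z => g 0 z) 1 = (1/4) * (-8 + 11*np)
    ∧ (-(1/4) * (5*np + 4*np*a - 4*a) < 0 ↔ a < (5/4) * np/(1 - np))
    ∧ ((1/4) * (-8 + 11*np) < 0 ↔ np < 8/11)
    ∧ ((deriv (fun x => f x 1) 0 < 0 ∧ deriv (fun z => g 0 z) 1 < 0)
        ↔ (np < 8/11 ∧ a < (5/4) * np/(1 - np))) := by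
  have hf_off : deriv (fun z => f 0 z) 1 = 0 := by simp [hf]
  have hg_off : deriv (fun x => g x 1) 0 = 0 := by simp [hg]
  have hfx : (fun x => f x 1) =
      fun x => x * (x - 1) * ((1/4) * (-3*np*x + 5*np + 4*np*a - 4*a)) :=
    funext fun x => by rw [hf]; ring
  have hgz : (fun z => g 0 z) =
      fun z => z * (z - 1) * (-(1/4) * (-16*np*z + 16*z + 5*np - 8)) :=
    funext fun z => by rw [hg]; ring
  have hf_diag : deriv (fun x => f x 1) 0 = -(1/4) * (5*np + 4*np*a - 4*a) := by
    rw [hfx, (hasDerivAt_mul_sub_one_mul_zero (by fun_prop)).deriv]; ring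
  have hg_diag : deriv (fun z => g 0 z) 1 = (1/4) * (-8 + 11*np) := by
    rw [hgz, (hasDerivAt_mul_sub_one_mul_one (by fun_prop)).deriv]; ring
  have hf_neg := neg_quarter_mul_lt_zero_iff_lt_div (a := a) hnp.2
  have hg_neg : (1/4) * (-8 + 11*np) < 0 ↔ np < 8/11 := by
    constructor <;> intro h <;> linarith
  refine ⟨⟨hf_off, hg_off⟩, hf_diag, hg_diag, hf_neg, hg_neg, ?_⟩
  rw [hf_diag, hg_diag, hf_neg, hg_neg, and_comm]
end

section
/- If 4/5 < n_p < 1 and (2/5)·(5·n_p − 3)/(1−n_p) < a < (2/5)·(3−n_p)/(1−n_p), then: (i) a > n_p/(2·(1−n_p)) (so (1,1) is stable); (ii) a < (5/4)·n_p/(1−n_p) (so (0,0) is stable); (iii) the interior equilibrium x* = (5·n_p + 4·n_p·a − 4·a)/(3·n_p) satisfies 0 < x* < 1; and (iv) neither (0,1) nor (1,0) is stable (since n_p > 8/11 and n_p > 4/5 violate their respective stability conditions). -/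
/-- Under the conditions of the basin-of-attraction theorem: (1,1) and (0,0) are
stable, the interior equilibrium is non-spurious, and (0,1), (1,0) are unstable. -/
theorem basin_hypotheses (np a : ℝ) (hnp : np ∈ Set.Ioo (4/5 : ℝ) 1)
    (ha1 : (2/5) * (5*np - 3)/(1 - np) < a) (ha2 : a < (2/5) * (3 - np)/(1 - np))
    (xs : ℝ) (hxs : xs = (5*np + 4*np*a - 4*a)/(3*np)) :
    (np/(2*(1 - np)) < a)
    ∧ (a < (5/4) * np/(1 - np))
    ∧ (0 < xs ∧ xs < 1)
    ∧ ¬(np < 8/11 ∧ a < (5/4) * np/(1 - np))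
    ∧ ¬(np < 4/5 ∧ np/(2*(1 - np)) < a) := by
  obtain ⟨h1, h2⟩ := hnp
  have hh : (0:ℝ) < 1 - np := by linarith
  have hnp0 : (0:ℝ) < np := by linarith
  have A1 : (2/5) * (5*np - 3) < a * (1 - np) := by
    have := (div_lt_iff₀ hh).mp ha1; linarith
  have A2 : a * (1 - np) < (2/5) * (3 - np) := by
    have := (lt_div_iff₀ hh).mp ha2; linarith
  refine ⟨?_, ?_, ⟨?_, ?_⟩, ?_, ?_⟩
  · rw [div_lt_iff₀ (by linarith)]; nlinarith
  · rw [lt_div_iff₀ hh]; nlinarith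
  · rw [hxs]; apply div_pos _ (by linarith); nlinarith
  · rw [hxs, div_lt_one (by linarith)]; nlinarith
  · rintro ⟨h, _⟩; linarith
  · rintro ⟨h, _⟩; linarith
end
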